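/- Let (g, ·) be a commutative associative algebra over a field K and let D₁, D₂, D₃ : g → g be derivations that pairwise commute (Dᵢ∘Dⱼ = Dⱼ∘Dᵢ for all i, j ∈ {1,2,3}). Then the trilinear bracket ⟦x,y,z⟧ defined as the 3×3 determinant (expanded with the multiplication of g) of the matrix with rows (D₁x, D₁y, D₁z), (D₂x, D₂y, D₂z), (D₃x, D₃y, D₃z) — i.e. ⟦x,y,z⟧ = Σ_{σ∈S₃} sgn(σ) D₁(u_{σ(1)}) · D₂(u_{σ(2)}) · D₃(u_{σ(3)}) with (u₁,u₂,u₃) = (x,y,z) — is skew-symmetric and satisfies the Filippov identity, so (g, ⟦·,·,·⟧) is a 3-Lie algebra. -/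

import Mathlib

/-- `br` is a 3-Lie algebra bracket over `K`: trilinear, alternating (skew-symmetric)
and satisfying the Filippov identity. -/
def Is3LieBracket (K : Type*) [Field K] {A : Type*} [AddCommGroup A] [Module K A]
    (br : A → A → A → A) : Prop :=
  (∀ x₁ x₂ y z, br (x₁ + x₂) y z = br x₁ y z + br x₂ y z) ∧
  (∀ (c : K) (x y z : A), br (c • x) y z = c • br x y z) ∧
  (∀ x y₁ y₂ z, br x (y₁ + y₂) z = br x y₁ z + br x y₂ z) ∧
  (∀ (c : K) (x y z : A), br x (c • y) z = c • br x y z) ∧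
  (∀ x y z₁ z₂, br x y (z₁ + z₂) = br x y z₁ + br x y z₂) ∧
  (∀ (c : K) (x y z : A), br x y (c • z) = c • br x y z) ∧
  (∀ x y, br x x y = 0) ∧ (∀ x y, br x y y = 0) ∧ (∀ x y, br x y x = 0) ∧
  (∀ x y a b c, br x y (br a b c) = br (br x y a) b c + br a (br x y b) c + br a b (br x y c))

/-- `N` is a Nijenhuis operator on the 3-Lie algebra `(A, br)`:
`[Nx,Ny,Nz] = N([x,y,z]_N²)` where
`[x,y,z]_N¹ = [Nx,y,z] + [x,Ny,z] + [x,y,Nz] − N[x,y,z]` and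
`[x,y,z]_N² = [Nx,Ny,z] + [Nx,y,Nz] + [x,Ny,Nz] − N([x,y,z]_N¹)`. -/
def IsNijenhuis3 (K : Type*) [Field K] {A : Type*} [AddCommGroup A] [Module K A]
    (br : A → A → A → A) (N : A →ₗ[K] A) : Prop :=
  ∀ x y z : A,
    br (N x) (N y) (N z)
      = N (br (N x) (N y) z + br (N x) y (N z) + br x (N y) (N z)
          - N (br (N x) y z + br x (N y) z + br x y (N z) - N (br x y z)))

/-- The 3×3 determinant bracket with rows `(D₁x,D₁y,D₁z)`, `(D₂x,D₂y,D₂z)`,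
`(D₃x,D₃y,D₃z)`, expanded with the multiplication of `A`:
`⟦x,y,z⟧ = ∑_{σ∈S₃} sgn(σ) D₁(u_{σ(1)}) · D₂(u_{σ(2)}) · D₃(u_{σ(3)})`. -/
def det3Bracket {K : Type*} [Field K] {A : Type*} [NonUnitalCommRing A] [Module K A]
    (D₁ D₂ D₃ : A →ₗ[K] A) (x y z : A) : A :=
  ∑ σ : Equiv.Perm (Fin 3),
    (Equiv.Perm.sign σ : ℤ) •
      (D₁ ((![x, y, z]) (σ 0)) * (D₂ ((![x, y, z]) (σ 1)) * D₃ ((![x, y, z]) (σ 2))))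

/-! Write `∇u = (D₁ u, D₂ u, D₃ u)`. Then `⟦x,y,z⟧ = (∇x × ∇y) · ∇z`, which makes multilinearity
and skew-symmetry immediate. For fixed `x, y` the map `E = ⟦x,y,·⟧ = ∑ⱼ cⱼ Dⱼ`, with
`c = ∇x × ∇y`, is again a derivation, and as the `Dᵢ` commute, `[E, Dᵢ] = -∑ⱼ Dᵢ(cⱼ) Dⱼ`.
Applying `E` to the determinant `⟦u,v,w⟧` row by row thus gives
`⟦Eu,v,w⟧ + ⟦u,Ev,w⟧ + ⟦u,v,Ew⟧ - (∑ᵢ Dᵢ cᵢ) ⟦u,v,w⟧`, and `∑ᵢ Dᵢ cᵢ = div (∇x × ∇y) = 0`. -/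

section

variable {A : Type*} [NonUnitalCommRing A]

def IsLeibniz (f : A → A) : Prop :=
  ∀ x y, f (x * y) = f x * y + x * f y

variable {K : Type*} [Field K] [Module K A]

open Equiv in
theorem det3Bracket_eq (D₁ D₂ D₃ : A →ₗ[K] A) (x y z : A) :
    det3Bracket D₁ D₂ D₃ x y z
      = D₁ x * (D₂ y * D₃ z) - D₁ x * (D₂ z * D₃ y) - D₁ y * (D₂ x * D₃ z)
        + D₁ y * (D₂ z * D₃ x) + D₁ z * (D₂ x * D₃ y) - D₁ z * (D₂ y * D₃ x) := by
  have huniv : (Finset.univ : Finset (Perm (Fin 3))) =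
      {1, swap 1 2, swap 0 1, swap 0 1 * swap 1 2, swap 0 2 * swap 1 2, swap 0 2} := by
    decide
  rw [det3Bracket, huniv]
  simp +decide [Finset.sum_insert, swap_apply_def]
  abel

-- `A` has no unit, so polynomial identities are checked by `ring` in `Unitization ℤ A`.
theorem det3Bracket_rotate (D₁ D₂ D₃ : A →ₗ[K] A) (x y z : A) :
    det3Bracket D₁ D₂ D₃ x y z = det3Bracket D₁ D₂ D₃ y z x := by
  rw [det3Bracket_eq, det3Bracket_eq]
  apply Unitization.inr_injective (R := ℤ)
  push_cast
  ring

variable (D : Fin 3 → A →ₗ[K] A)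

/-- The cross product `∇x × ∇y` of the gradients `∇u = (D i u)ᵢ`. -/
def det3Cofactor (x y : A) : Fin 3 → A :=
  ![D 1 x * D 2 y - D 2 x * D 1 y, D 2 x * D 0 y - D 0 x * D 2 y, D 0 x * D 1 y - D 1 x * D 0 y]

theorem det3Cofactor_self (x : A) : det3Cofactor D x x = 0 := by
  ext i
  fin_cases i <;> simp [det3Cofactor, mul_comm]

theorem det3Bracket_eq_sum_det3Cofactor (x y z : A) :
    det3Bracket (D 0) (D 1) (D 2) x y z = ∑ j, det3Cofactor D x y j * D j z := by
  rw [det3Bracket_eq, Fin.sum_univ_three]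
  simp only [det3Cofactor, Matrix.cons_val]
  apply Unitization.inr_injective (R := ℤ)
  push_cast
  ring

theorem det3Bracket_add_right (x y z₁ z₂ : A) :
    det3Bracket (D 0) (D 1) (D 2) x y (z₁ + z₂)
      = det3Bracket (D 0) (D 1) (D 2) x y z₁ + det3Bracket (D 0) (D 1) (D 2) x y z₂ := by
  simp only [det3Bracket_eq_sum_det3Cofactor, map_add, mul_add, Finset.sum_add_distrib]

theorem det3Bracket_smul_right [SMulCommClass K A A] (c : K) (x y z : A) :
    det3Bracket (D 0) (D 1) (D 2) x y (c • z) = c • det3Bracket (D 0) (D 1) (D 2) x y z := by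
  simp only [det3Bracket_eq_sum_det3Cofactor, map_smul, mul_smul_comm, Finset.smul_sum]

theorem det3Bracket_self_left (x y : A) : det3Bracket (D 0) (D 1) (D 2) x x y = 0 := by
  simp [det3Bracket_eq_sum_det3Cofactor, det3Cofactor_self]

theorem IsLeibniz.map_det3Bracket {E : A →+ A} (hE : IsLeibniz E) {m : Fin 3 → Fin 3 → A}
    (hm : ∑ i, m i i = 0) (hED : ∀ i w, E (D i w) = D i (E w) - ∑ j, m i j * D j w)
    (u v w : A) :
    E (det3Bracket (D 0) (D 1) (D 2) u v w)
      = det3Bracket (D 0) (D 1) (D 2) (E u) v w + det3Bracket (D 0) (D 1) (D 2) u (E v) w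
        + det3Bracket (D 0) (D 1) (D 2) u v (E w) := by
  have h22 : m 2 2 = -m 0 0 - m 1 1 := by
    rw [Fin.sum_univ_three] at hm
    rw [← sub_eq_zero, ← hm]
    abel
  simp only [det3Bracket_eq, map_add, map_sub, hE _ _, hED, Fin.sum_univ_three, h22]
  apply Unitization.inr_injective (R := ℤ)
  push_cast
  ring

variable {D}

theorem isLeibniz_det3Bracket (hD : ∀ i, IsLeibniz (D i)) (x y : A) :
    IsLeibniz (det3Bracket (D 0) (D 1) (D 2) x y) := by
  intro u v
  simp only [det3Bracket_eq_sum_det3Cofactor, hD _ u v, mul_add, Finset.sum_add_distrib,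
    Finset.sum_mul, Finset.mul_sum, mul_assoc, mul_left_comm]

theorem apply_det3Bracket (hD : ∀ i, IsLeibniz (D i))
    (hcomm : ∀ i j x, D i (D j x) = D j (D i x)) (i : Fin 3) (x y z : A) :
    D i (det3Bracket (D 0) (D 1) (D 2) x y z)
      = det3Bracket (D 0) (D 1) (D 2) x y (D i z) + ∑ j, D i (det3Cofactor D x y j) * D j z := by
  simp only [det3Bracket_eq_sum_det3Cofactor, map_sum, hD i _ _, hcomm i, Finset.sum_add_distrib,
    add_comm]

theorem sum_apply_det3Cofactor (hD : ∀ i, IsLeibniz (D i))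
    (hcomm : ∀ i j x, D i (D j x) = D j (D i x)) (x y : A) :
    ∑ i, D i (det3Cofactor D x y i) = 0 := by
  simp only [Fin.sum_univ_three, det3Cofactor, Matrix.cons_val, map_sub, hD _ _ _,
    hcomm 1 0, hcomm 2 0, hcomm 2 1]
  apply Unitization.inr_injective (R := ℤ)
  push_cast
  ring

theorem det3Bracket_filippov (hD : ∀ i, IsLeibniz (D i))
    (hcomm : ∀ i j x, D i (D j x) = D j (D i x)) (x y u v w : A) :
    det3Bracket (D 0) (D 1) (D 2) x y (det3Bracket (D 0) (D 1) (D 2) u v w)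
      = det3Bracket (D 0) (D 1) (D 2) (det3Bracket (D 0) (D 1) (D 2) x y u) v w
        + det3Bracket (D 0) (D 1) (D 2) u (det3Bracket (D 0) (D 1) (D 2) x y v) w
        + det3Bracket (D 0) (D 1) (D 2) u v (det3Bracket (D 0) (D 1) (D 2) x y w) :=
  IsLeibniz.map_det3Bracket D (E := AddMonoidHom.mk' _ (det3Bracket_add_right D x y))
    (isLeibniz_det3Bracket hD x y) (sum_apply_det3Cofactor hD hcomm x y)
    (fun i w => eq_sub_of_add_eq (apply_det3Bracket hD hcomm i x y w).symm) u v w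

theorem is3LieBracket_det3Bracket [SMulCommClass K A A] (hD : ∀ i, IsLeibniz (D i))
    (hcomm : ∀ i j x, D i (D j x) = D j (D i x)) :
    Is3LieBracket K (det3Bracket (D 0) (D 1) (D 2)) := by
  refine ⟨fun x₁ x₂ y z => ?_, fun c x y z => ?_, fun x y₁ y₂ z => ?_, fun c x y z => ?_,
    det3Bracket_add_right D, det3Bracket_smul_right D, det3Bracket_self_left D,
    fun x y => ?_, fun x y => ?_, det3Bracket_filippov hD hcomm⟩
  · simp only [det3Bracket_rotate _ _ _ _ y z, det3Bracket_add_right]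
  · simp only [det3Bracket_rotate _ _ _ _ y z, det3Bracket_smul_right]
  · simp only [← det3Bracket_rotate _ _ _ z, det3Bracket_add_right]
  · simp only [← det3Bracket_rotate _ _ _ z, det3Bracket_smul_right]
  · rw [det3Bracket_rotate, det3Bracket_self_left]
  · rw [← det3Bracket_rotate, det3Bracket_self_left]

end

theorem three_derivations_threeLie_general
    {K : Type*} [Field K] {A : Type*} [NonUnitalCommRing A] [Module K A]
    [SMulCommClass K A A]
    (D₁ D₂ D₃ : A →ₗ[K] A)
    (hD₁ : ∀ x y : A, D₁ (x * y) = D₁ x * y + x * D₁ y)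
    (hD₂ : ∀ x y : A, D₂ (x * y) = D₂ x * y + x * D₂ y)
    (hD₃ : ∀ x y : A, D₃ (x * y) = D₃ x * y + x * D₃ y)
    (h12 : ∀ x : A, D₁ (D₂ x) = D₂ (D₁ x))
    (h13 : ∀ x : A, D₁ (D₃ x) = D₃ (D₁ x))
    (h23 : ∀ x : A, D₂ (D₃ x) = D₃ (D₂ x)) :
    Is3LieBracket K (det3Bracket D₁ D₂ D₃) := by
  let D : Fin 3 → A →ₗ[K] A := ![D₁, D₂, D₃]
  have hD : ∀ i, IsLeibniz (D i) := by
    intro i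
    fin_cases i
    exacts [hD₁, hD₂, hD₃]
  have hcomm : ∀ i j x, D i (D j x) = D j (D i x) := by
    intro i j x
    fin_cases i <;> fin_cases j <;> simp [D, h12, h13, h23]
  exact is3LieBracket_det3Bracket hD hcomm

/-- If `D₁, D₂, D₃` are pairwise commuting derivations of a
commutative associative algebra `(A, *)` over `K`, then the determinant bracket
with rows `(D₁x,D₁y,D₁z)`, `(D₂x,D₂y,D₂z)`, `(D₃x,D₃y,D₃z)` is a 3-Lie algebra
bracket on `A`. -/
theorem three_derivations_threeLie
    {K : Type*} [Field K] {A : Type*} [NonUnitalCommRing A] [Module K A]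
    [SMulCommClass K A A] [IsScalarTower K A A]
    (D₁ D₂ D₃ : A →ₗ[K] A)
    (hD₁ : ∀ x y : A, D₁ (x * y) = D₁ x * y + x * D₁ y)
    (hD₂ : ∀ x y : A, D₂ (x * y) = D₂ x * y + x * D₂ y)
    (hD₃ : ∀ x y : A, D₃ (x * y) = D₃ x * y + x * D₃ y)
    (h12 : ∀ x : A, D₁ (D₂ x) = D₂ (D₁ x))
    (h13 : ∀ x : A, D₁ (D₃ x) = D₃ (D₁ x))
    (h23 : ∀ x : A, D₂ (D₃ x) = D₃ (D₂ x)) :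
    Is3LieBracket K (det3Bracket D₁ D₂ D₃) :=
  three_derivations_threeLie_general D₁ D₂ D₃ hD₁ hD₂ hD₃ h12 h13 h23
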